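/- arXiv:1601.06686 — 8 statements merged into one kernel-verified Lean document; each statement's English description precedes it below -/
import Mathlib

section
/- Let N ≥ 1 be an integer and ρ1, ρ2, ρ12, λ real numbers. Then det(Q(N,ρ1,ρ2,ρ12) − λ·I_{2N}) = ((1−λ+(N−1)ρ1)·(1−λ+(N−1)ρ2) − N²ρ12²) · ((1−λ−ρ1)·(1−λ−ρ2))^{N−1}. -/
/-
Every block of `Q N ρ1 ρ2 ρ12 - λ • 1` has the form `c • J + d • 1`. In the basis
`(1, e₁, …, e_{N-1})`, where `1` is the all-ones vector, `J` becomes upper triangular with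
diagonal `(N, 0, …, 0)`, so all four blocks become upper triangular at once. A `2 × 2` block
matrix with upper triangular blocks is block triangular for the pairs `{(1, k), (2, k)}`, so its
determinant is the product over `k` of the `2 × 2` determinants of the diagonal entries: the factor
at `k = 0` involves `N`, the other `N - 1` factors all equal `(1 - λ - ρ1) (1 - λ - ρ2)`.
-/

open Matrix

noncomputable section

/-- The all-ones matrix. -/
def J (a b : ℕ) : Matrix (Fin a) (Fin b) ℝ := Matrix.of fun _ _ => 1

/-- The structured correlation matrix of the symmetric 2-layer N-relay Gaussian network. -/
def Q (N : ℕ) (ρ1 ρ2 ρ12 : ℝ) : Matrix (Fin N ⊕ Fin N) (Fin N ⊕ Fin N) ℝ :=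
  Matrix.fromBlocks (ρ1 • J N N + (1 - ρ1) • 1) (ρ12 • J N N)
    (ρ12 • J N N) (ρ2 • J N N + (1 - ρ2) • 1)

namespace Matrix

theorem blockTriangular_fromBlocks_sumElim {R n : Type*} [Zero R] [LT n] {A B C D : Matrix n n R}
    (hA : A.IsUpperTriangular) (hB : B.IsUpperTriangular) (hC : C.IsUpperTriangular)
    (hD : D.IsUpperTriangular) :
    (fromBlocks A B C D).BlockTriangular (Sum.elim id id) := by
  rintro (i | i) (j | j) hij
  · exact hA hij
  · exact hB hij
  · exact hC hij
  · exact hD hij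

theorem det_toSquareBlock_fromBlocks_sumElim {R n : Type*} [CommRing R] [Fintype n]
    [DecidableEq n] (A B C D : Matrix n n R) (k : n) :
    ((fromBlocks A B C D).toSquareBlock (Sum.elim id id) k).det
      = A k k * D k k - B k k * C k k := by
  let e : Fin 2 ≃ {x : n ⊕ n // Sum.elim id id x = k} :=
    { toFun := ![⟨.inl k, rfl⟩, ⟨.inr k, rfl⟩]
      invFun := fun x => x.1.elim (fun _ => 0) (fun _ => 1)
      left_inv := by intro i; fin_cases i <;> rfl
      right_inv := by rintro ⟨x | x, rfl⟩ <;> rfl }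
  rw [← det_submatrix_equiv_self e, det_fin_two]
  rfl

theorem det_fromBlocks_of_isUpperTriangular {R n : Type*} [CommRing R] [Fintype n]
    [DecidableEq n] [LinearOrder n] {A B C D : Matrix n n R}
    (hA : A.IsUpperTriangular) (hB : B.IsUpperTriangular) (hC : C.IsUpperTriangular)
    (hD : D.IsUpperTriangular) :
    (fromBlocks A B C D).det = ∏ k, (A k k * D k k - B k k * C k k) := by
  rw [(blockTriangular_fromBlocks_sumElim hA hB hC hD).det_fintype]
  exact Finset.prod_congr rfl fun k _ => det_toSquareBlock_fromBlocks_sumElim A B C D k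

end Matrix

/-- Columns: the all-ones vector, then `e₁, …, eₙ`. -/
def jBasis (R : Type*) [Semiring R] (n : ℕ) : Matrix (Fin (n + 1)) (Fin (n + 1)) R :=
  of fun i j => if j = 0 ∨ i = j then 1 else 0

def jTriangular (R : Type*) [Semiring R] (n : ℕ) : Matrix (Fin (n + 1)) (Fin (n + 1)) R :=
  of fun i j => if i = 0 then (if j = 0 then n + 1 else 1) else 0

theorem det_jBasis (R : Type*) [CommRing R] (n : ℕ) : (jBasis R n).det = 1 := by
  rw [det_of_isLowerTriangular]
  · simp [jBasis]
  · intro i j (hij : i < j)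
    simp [jBasis, hij.ne, ((Fin.zero_le i).trans_lt hij).ne']

theorem jTriangular_isUpperTriangular (R : Type*) [Semiring R] (n : ℕ) :
    (jTriangular R n).IsUpperTriangular := by
  intro i j (hij : j < i)
  simp [jTriangular, ((Fin.zero_le j).trans_lt hij).ne']

theorem jTriangular_apply_self (R : Type*) [Semiring R] (n : ℕ) (k : Fin (n + 1)) :
    jTriangular R n k k = if k = 0 then (n + 1 : R) else 0 := by
  by_cases hk : k = 0 <;> simp [jTriangular, hk]

theorem J_mul_jBasis (n : ℕ) :
    _root_.J (n + 1) (n + 1) * jBasis ℝ n = jBasis ℝ n * jTriangular ℝ n := by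
  ext i j
  by_cases hj : j = 0 <;> simp [_root_.J, jBasis, jTriangular, mul_apply, hj]

theorem smul_jTriangular_add_smul_one_isUpperTriangular {R : Type*} [Semiring R] (n : ℕ)
    (c d : R) : (c • jTriangular R n + d • 1).IsUpperTriangular := fun i j (h : j < i) => by
  simp [jTriangular_isUpperTriangular R n h, one_apply_ne h.ne']

theorem smul_J_add_smul_one_mul_jBasis (n : ℕ) (c d : ℝ) :
    (c • _root_.J (n + 1) (n + 1) + d • 1) * jBasis ℝ n
      = jBasis ℝ n * (c • jTriangular ℝ n + d • 1) := by
  simp only [Matrix.add_mul, Matrix.mul_add, Matrix.smul_mul, Matrix.mul_smul, J_mul_jBasis,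
    Matrix.one_mul, Matrix.mul_one]

theorem det_fromBlocks_smul_J_add_smul_one (n : ℕ) (c₁ d₁ c₂ d₂ c₃ d₃ c₄ d₄ : ℝ) :
    (fromBlocks
        (c₁ • _root_.J (n + 1) (n + 1) + d₁ • 1) (c₂ • _root_.J (n + 1) (n + 1) + d₂ • 1)
        (c₃ • _root_.J (n + 1) (n + 1) + d₃ • 1) (c₄ • _root_.J (n + 1) (n + 1) + d₄ • 1)).det
      = ((c₁ * (n + 1) + d₁) * (c₄ * (n + 1) + d₄)
          - (c₂ * (n + 1) + d₂) * (c₃ * (n + 1) + d₃)) * (d₁ * d₄ - d₂ * d₃) ^ n := by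
  set P := fromBlocks (jBasis ℝ n) 0 0 (jBasis ℝ n)
  have hP : P.det = 1 := by simp [P, det_fromBlocks_zero₂₁, det_jBasis]
  have det_eq_of_conj (M M' : Matrix _ _ ℝ) (h : M * P = P * M') : M.det = M'.det := by
    simpa [hP] using congrArg det h
  have hT := smul_jTriangular_add_smul_one_isUpperTriangular (R := ℝ) n
  refine (det_eq_of_conj _ (fromBlocks (c₁ • jTriangular ℝ n + d₁ • 1)
      (c₂ • jTriangular ℝ n + d₂ • 1) (c₃ • jTriangular ℝ n + d₃ • 1)
      (c₄ • jTriangular ℝ n + d₄ • 1)) ?_).trans ?_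
  · simp only [P, fromBlocks_multiply, smul_J_add_smul_one_mul_jBasis, Matrix.mul_zero,
      Matrix.zero_mul, add_zero, zero_add]
  · rw [det_fromBlocks_of_isUpperTriangular (hT _ _) (hT _ _) (hT _ _) (hT _ _),
      Fin.prod_univ_succ]
    simp [jTriangular_apply_self, Fin.succ_ne_zero]

theorem stmt_0 (N : ℕ) (hN : 1 ≤ N) (ρ1 ρ2 ρ12 lam : ℝ) :
    (Q N ρ1 ρ2 ρ12 - lam • 1).det
      = ((1 - lam + ((N : ℝ) - 1) * ρ1) * (1 - lam + ((N : ℝ) - 1) * ρ2)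
          - (N : ℝ) ^ 2 * ρ12 ^ 2)
        * ((1 - lam - ρ1) * (1 - lam - ρ2)) ^ (N - 1) := by
  obtain ⟨n, rfl⟩ := Nat.exists_eq_add_of_le' hN
  have hQ : Q (n + 1) ρ1 ρ2 ρ12 - lam • 1
      = fromBlocks (ρ1 • _root_.J (n + 1) (n + 1) + (1 - lam - ρ1) • 1)
          (ρ12 • _root_.J (n + 1) (n + 1) + (0 : ℝ) • 1)
          (ρ12 • _root_.J (n + 1) (n + 1) + (0 : ℝ) • 1)
          (ρ2 • _root_.J (n + 1) (n + 1) + (1 - lam - ρ2) • 1) := by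
    rw [Q, ← fromBlocks_one, fromBlocks_smul, sub_eq_add_neg, fromBlocks_neg, fromBlocks_add]
    congr 1 <;> module
  rw [hQ, det_fromBlocks_smul_J_add_smul_one, Nat.add_sub_cancel]
  push_cast
  ring
end
end

section
/- Let N ≥ 2 be an integer and ρ1, ρ2, ρ12 real numbers. The matrix Q(N,ρ1,ρ2,ρ12) is positive semidefinite if and only if ρ1 ≤ 1, ρ2 ≤ 1, 1+(N−1)ρ1 ≥ 0, 1+(N−1)ρ2 ≥ 0, and N²ρ12² ≤ (1+(N−1)ρ1)·(1+(N−1)ρ2). -/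
open Matrix

noncomputable section

/-!
For `u, v : Fin N → ℝ` the quadratic form of `Q` only sees `Σ u`, `Σ u²`, `Σ v`, `Σ v²`:
`N · (u, v)ᵀ Q (u, v) = (1 - ρ1)(N Σ u² - (Σ u)²) + (1 - ρ2)(N Σ v² - (Σ v)²) + q(Σ u, Σ v)`
with the binary form `q(s, t) = (1 + (N-1)ρ1) s² + 2Nρ12 st + (1 + (N-1)ρ2) t²`.
By Cauchy–Schwarz both brackets are nonnegative, so `ρ1, ρ2 ≤ 1` and `q ≥ 0` suffice.
Conversely, `eᵢ - eⱼ` in one block gives `2(1 - ρ)`, and constant vectors give `N · q`;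
nonnegativity of `q` is the discriminant condition.
-/

theorem binary_form_nonneg_iff {A B C : ℝ} :
    (∀ s t : ℝ, 0 ≤ A * s ^ 2 + 2 * C * s * t + B * t ^ 2) ↔ 0 ≤ A ∧ 0 ≤ B ∧ C ^ 2 ≤ A * B := by
  constructor
  · intro h
    refine ⟨by simpa using h 1 0, by simpa using h 0 1, ?_⟩
    have := discrim_le_zero (a := A) (b := 2 * C) (c := B) fun s => (h s 1).trans_eq (by ring)
    rw [discrim] at this
    linarith
  · rintro ⟨hA, hB, hC⟩ s t
    rcases hA.eq_or_lt with rfl | hA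
    · obtain rfl : C = 0 := by nlinarith
      nlinarith
    · nlinarith [sq_nonneg (A * s + C * t), mul_nonneg (sub_nonneg.2 hC) (sq_nonneg t)]

theorem dotProduct_J_mulVec {a b : ℕ} (x : Fin a → ℝ) (y : Fin b → ℝ) :
    x ⬝ᵥ (_root_.J a b *ᵥ y) = (∑ i, x i) * ∑ j, y j := by
  simp [dotProduct, mulVec, _root_.J, Finset.sum_mul]

theorem Q_transpose (N : ℕ) (ρ1 ρ2 ρ12 : ℝ) : (Q N ρ1 ρ2 ρ12)ᵀ = Q N ρ1 ρ2 ρ12 := by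
  have hJ : (_root_.J N N)ᵀ = _root_.J N N := rfl
  simp [Q, fromBlocks_transpose, hJ]

theorem Q_submatrix_swap (N : ℕ) (ρ1 ρ2 ρ12 : ℝ) :
    (Q N ρ1 ρ2 ρ12).submatrix Sum.swap Sum.swap = Q N ρ2 ρ1 ρ12 :=
  fromBlocks_submatrix_sum_swap_sum_swap _ _ _ _

section QuadraticForm

variable {N : ℕ} {ρ1 ρ2 ρ12 : ℝ}

theorem dotProduct_Q_mulVec (u v : Fin N → ℝ) :
    (u ⊕ᵥ v) ⬝ᵥ (Q N ρ1 ρ2 ρ12 *ᵥ (u ⊕ᵥ v)) =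
      ρ1 * (∑ i, u i) ^ 2 + (1 - ρ1) * ∑ i, u i ^ 2 + ρ2 * (∑ i, v i) ^ 2 +
        (1 - ρ2) * ∑ i, v i ^ 2 + 2 * ρ12 * (∑ i, u i) * ∑ i, v i := by
  simp only [Q, fromBlocks_mulVec, Sum.elim_comp_inl, Sum.elim_comp_inr,
    sumElim_dotProduct_sumElim, dotProduct_add, add_mulVec, smul_mulVec, dotProduct_smul,
    one_mulVec, dotProduct_J_mulVec, smul_eq_mul]
  simp only [dotProduct, sq]
  ring

theorem natCast_mul_dotProduct_Q_mulVec (u v : Fin N → ℝ) :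
    N * ((u ⊕ᵥ v) ⬝ᵥ (Q N ρ1 ρ2 ρ12 *ᵥ (u ⊕ᵥ v))) =
      (1 - ρ1) * (N * ∑ i, u i ^ 2 - (∑ i, u i) ^ 2) +
        (1 - ρ2) * (N * ∑ i, v i ^ 2 - (∑ i, v i) ^ 2) +
        ((1 + (N - 1) * ρ1) * (∑ i, u i) ^ 2 + 2 * (N * ρ12) * (∑ i, u i) * (∑ i, v i) +
          (1 + (N - 1) * ρ2) * (∑ i, v i) ^ 2) := by
  rw [dotProduct_Q_mulVec]
  ring

theorem dotProduct_Q_mulVec_const (s t : ℝ) :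
    ((fun _ => s) ⊕ᵥ fun _ => t) ⬝ᵥ (Q N ρ1 ρ2 ρ12 *ᵥ ((fun _ => s) ⊕ᵥ fun _ => t)) =
      N * ((1 + (N - 1) * ρ1) * s ^ 2 + 2 * (N * ρ12) * s * t + (1 + (N - 1) * ρ2) * t ^ 2) := by
  simp only [dotProduct_Q_mulVec, Finset.sum_const, Finset.card_univ, Fintype.card_fin,
    nsmul_eq_mul]
  ring

theorem dotProduct_Q_mulVec_single_sub_single {i j : Fin N} (hij : i ≠ j) :
    (Pi.single i 1 - Pi.single j 1 ⊕ᵥ 0) ⬝ᵥ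
        (Q N ρ1 ρ2 ρ12 *ᵥ (Pi.single i 1 - Pi.single j 1 ⊕ᵥ 0)) = 2 * (1 - ρ1) := by
  have hsq : ∀ k, ((Pi.single i 1 - Pi.single j 1 : Fin N → ℝ) k) ^ 2 =
      (Pi.single i 1 + Pi.single j 1 : Fin N → ℝ) k := by
    intro k
    by_cases hi : k = i <;> by_cases hj : k = j <;> simp_all
  have hsum : ∑ k, (Pi.single i 1 - Pi.single j 1 : Fin N → ℝ) k = 0 := by
    simp [Finset.sum_sub_distrib]
  have hsum_sq : ∑ k, ((Pi.single i 1 - Pi.single j 1 : Fin N → ℝ) k) ^ 2 = 2 := by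
    rw [Fintype.sum_congr _ _ hsq]
    simp [Finset.sum_add_distrib, one_add_one_eq_two]
  rw [dotProduct_Q_mulVec, hsum, hsum_sq]
  simp [mul_comm]

theorem le_one_of_posSemidef_Q [Nontrivial (Fin N)] (hQ : (Q N ρ1 ρ2 ρ12).PosSemidef) :
    ρ1 ≤ 1 := by
  obtain ⟨i, j, hij⟩ := exists_pair_ne (Fin N)
  have := (posSemidef_iff_dotProduct_mulVec.mp hQ).2 (Pi.single i 1 - Pi.single j 1 ⊕ᵥ 0)
  rw [star_trivial, dotProduct_Q_mulVec_single_sub_single hij] at this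
  linarith

theorem dotProduct_Q_mulVec_nonneg (hN : 0 < N) (h1 : ρ1 ≤ 1) (h2 : ρ2 ≤ 1)
    (hq : ∀ s t : ℝ,
      0 ≤ (1 + (N - 1) * ρ1) * s ^ 2 + 2 * (N * ρ12) * s * t + (1 + (N - 1) * ρ2) * t ^ 2)
    (u v : Fin N → ℝ) : 0 ≤ (u ⊕ᵥ v) ⬝ᵥ (Q N ρ1 ρ2 ρ12 *ᵥ (u ⊕ᵥ v)) := by
  refine nonneg_of_mul_nonneg_right ?_ (Nat.cast_pos.mpr hN)
  rw [natCast_mul_dotProduct_Q_mulVec]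
  have hu := sq_sum_le_card_mul_sum_sq (s := Finset.univ) (f := u)
  have hv := sq_sum_le_card_mul_sum_sq (s := Finset.univ) (f := v)
  simp only [Finset.card_univ, Fintype.card_fin] at hu hv
  have hu' : 0 ≤ (1 - ρ1) * (N * ∑ i, u i ^ 2 - (∑ i, u i) ^ 2) :=
    mul_nonneg (sub_nonneg.mpr h1) (sub_nonneg.mpr hu)
  have hv' : 0 ≤ (1 - ρ2) * (N * ∑ i, v i ^ 2 - (∑ i, v i) ^ 2) :=
    mul_nonneg (sub_nonneg.mpr h2) (sub_nonneg.mpr hv)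
  exact add_nonneg (add_nonneg hu' hv') (hq _ _)

end QuadraticForm

theorem stmt_1 (N : ℕ) (hN : 2 ≤ N) (ρ1 ρ2 ρ12 : ℝ) :
    (Q N ρ1 ρ2 ρ12).PosSemidef ↔
      ρ1 ≤ 1 ∧ ρ2 ≤ 1 ∧ 0 ≤ 1 + ((N : ℝ) - 1) * ρ1 ∧ 0 ≤ 1 + ((N : ℝ) - 1) * ρ2 ∧
        (N : ℝ) ^ 2 * ρ12 ^ 2 ≤ (1 + ((N : ℝ) - 1) * ρ1) * (1 + ((N : ℝ) - 1) * ρ2) := by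
  have : Nontrivial (Fin N) := Fin.nontrivial_iff_two_le.mpr hN
  rw [← mul_pow, ← binary_form_nonneg_iff]
  constructor
  · intro hQ
    have hQ_swap : (Q N ρ2 ρ1 ρ12).PosSemidef := by
      rw [← Q_submatrix_swap]
      exact hQ.submatrix _
    refine ⟨le_one_of_posSemidef_Q hQ, le_one_of_posSemidef_Q hQ_swap, fun s t => ?_⟩
    have := (posSemidef_iff_dotProduct_mulVec.mp hQ).2 ((fun _ => s) ⊕ᵥ fun _ => t)
    rw [star_trivial, dotProduct_Q_mulVec_const] at this
    exact nonneg_of_mul_nonneg_right this (by positivity)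
  · rintro ⟨h1, h2, hq⟩
    refine posSemidef_iff_dotProduct_mulVec.mpr ⟨Q_transpose N ρ1 ρ2 ρ12, fun x => ?_⟩
    rw [star_trivial, ← Sum.elim_comp_inl_inr x]
    exact dotProduct_Q_mulVec_nonneg (by omega) h1 h2 hq _ _
end
end

section
/- Let n, m ≥ 1 be integers and ρ1, ρ2, ρ12 real numbers with ρ1 ≠ 1, ρ2 ≠ 1, 1+(n−1)ρ1 ≠ 0, and (1+(n−1)ρ1)·(1+(m−1)ρ2) − m·n·ρ12² ≠ 0. Then the (n+m)×(n+m) block matrix [[ρ1·J_n + (1−ρ1)·I_n, ρ12·J_{n,m}], [ρ12·J_{m,n}, ρ2·J_m + (1−ρ2)·I_m]] is invertible, and there exist real numbers a, b, c, d, g such that its inverse equals the block matrix [[a·J_n + b·I_n, c·J_{n,m}], [c·J_{m,n}, d·J_m + g·I_m]]. -/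
/-!
Since `J_{a,b} * J_{b,c} = b • J_{a,c}`, the span of `J_n` and `I_n` is closed under
multiplication, and the product of two block matrices of the stated shape has blocks that are
again combinations of `J` and `I`. So the block matrix times the candidate inverse is the identity
as soon as six scalar equations hold, a linear system in `a, b, c, d, g` whose solution is
`b = 1/(1-ρ1)`, `g = 1/(1-ρ2)`, `c = -ρ12/E`, and `a`, `d` as written below, with
`E = (1+(n-1)ρ1)(1+(m-1)ρ2) - mnρ12²`.
-/

open Matrix

noncomputable section

lemma J_mul_J (a b c : ℕ) : J a b * J b c = (b : ℝ) • J a c := by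
  ext i j
  simp [_root_.J, mul_apply]

lemma smul_J_add_smul_one_mul_smul_J_add_smul_one (n : ℕ) (x y x' y' : ℝ) :
    (x • J n n + y • (1 : Matrix (Fin n) (Fin n) ℝ)) * (x' • J n n + y' • 1) =
      (n * x * x' + x * y' + y * x') • J n n + (y * y') • 1 := by
  simp only [Matrix.add_mul, Matrix.mul_add, Matrix.smul_mul, Matrix.mul_smul, smul_smul, J_mul_J,
    Matrix.one_mul, Matrix.mul_one]
  match_scalars <;> ring

lemma smul_J_add_smul_one_mul_smul_J (n m : ℕ) (x y z : ℝ) :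
    (x • J n n + y • (1 : Matrix (Fin n) (Fin n) ℝ)) * (z • J n m) =
      ((n * x + y) * z) • J n m := by
  simp only [Matrix.add_mul, Matrix.smul_mul, Matrix.mul_smul, smul_smul, J_mul_J,
    Matrix.one_mul]
  match_scalars; ring

lemma smul_J_mul_smul_J_add_smul_one (n m : ℕ) (x y z : ℝ) :
    (z • J m n) * (x • J n n + y • (1 : Matrix (Fin n) (Fin n) ℝ)) =
      (z * (n * x + y)) • J m n := by
  simp only [Matrix.mul_add, Matrix.smul_mul, Matrix.mul_smul, smul_smul, J_mul_J,
    Matrix.mul_one]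
  match_scalars; ring

lemma smul_J_mul_smul_J (n m k : ℕ) (z z' : ℝ) :
    (z • J n m) * (z' • J m k) = (m * z * z') • J n k := by
  simp only [Matrix.smul_mul, Matrix.mul_smul, smul_smul, J_mul_J]
  match_scalars; ring

lemma fromBlocks_exchangeable_mul_eq_one {n m : ℕ} {p q r s t a b c d g : ℝ}
    (hb : q * b = 1) (hg : t * g = 1)
    (hA : n * p * a + p * b + q * a + m * r * c = 0)
    (hB : (n * p + q) * c + r * (m * d + g) = 0)
    (hC : r * (n * a + b) + (m * s + t) * c = 0)
    (hD : n * r * c + m * s * d + s * g + t * d = 0) :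
    fromBlocks (p • J n n + q • (1 : Matrix (Fin n) (Fin n) ℝ)) (r • J n m)
        (r • J m n) (s • J m m + t • (1 : Matrix (Fin m) (Fin m) ℝ)) *
      fromBlocks (a • J n n + b • (1 : Matrix (Fin n) (Fin n) ℝ)) (c • J n m)
        (c • J m n) (d • J m m + g • (1 : Matrix (Fin m) (Fin m) ℝ)) = 1 := by
  rw [fromBlocks_multiply, ← fromBlocks_one]
  simp only [smul_J_add_smul_one_mul_smul_J_add_smul_one, smul_J_add_smul_one_mul_smul_J,
    smul_J_mul_smul_J_add_smul_one, smul_J_mul_smul_J]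
  congr 1
  · match_scalars
    · linear_combination hA
    · linear_combination hb
  · match_scalars
    linear_combination hB
  · match_scalars
    linear_combination hC
  · match_scalars
    · linear_combination hD
    · linear_combination hg

theorem stmt_7_general (n m : ℕ) (ρ1 ρ2 ρ12 : ℝ)
    (h1 : ρ1 ≠ 1) (h2 : ρ2 ≠ 1)
    (hE : (1 + ((n : ℝ) - 1) * ρ1) * (1 + ((m : ℝ) - 1) * ρ2)
        - (m : ℝ) * (n : ℝ) * ρ12 ^ 2 ≠ 0) :
    IsUnit (Matrix.fromBlocks
        (ρ1 • J n n + (1 - ρ1) • (1 : Matrix (Fin n) (Fin n) ℝ)) (ρ12 • J n m)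
        (ρ12 • J m n) (ρ2 • J m m + (1 - ρ2) • (1 : Matrix (Fin m) (Fin m) ℝ))) ∧
    ∃ a b c d g : ℝ,
      (Matrix.fromBlocks
          (ρ1 • J n n + (1 - ρ1) • (1 : Matrix (Fin n) (Fin n) ℝ)) (ρ12 • J n m)
          (ρ12 • J m n) (ρ2 • J m m + (1 - ρ2) • (1 : Matrix (Fin m) (Fin m) ℝ)))⁻¹
        = Matrix.fromBlocks
            (a • J n n + b • (1 : Matrix (Fin n) (Fin n) ℝ)) (c • J n m)
            (c • J m n) (d • J m m + g • (1 : Matrix (Fin m) (Fin m) ℝ)) := by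
  set E := (1 + ((n : ℝ) - 1) * ρ1) * (1 + ((m : ℝ) - 1) * ρ2) - (m : ℝ) * (n : ℝ) * ρ12 ^ 2
    with hE_def
  have h1' : 1 - ρ1 ≠ 0 := sub_ne_zero.mpr h1.symm
  have h2' : 1 - ρ2 ≠ 0 := sub_ne_zero.mpr h2.symm
  have hinv := fromBlocks_exchangeable_mul_eq_one (n := n) (m := m)
    (p := ρ1) (q := 1 - ρ1) (r := ρ12) (s := ρ2) (t := 1 - ρ2)
    (a := (m * ρ12 ^ 2 - ρ1 * (1 + (m - 1) * ρ2)) / (E * (1 - ρ1))) (b := 1 / (1 - ρ1))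
    (c := -ρ12 / E)
    (d := (n * ρ12 ^ 2 - ρ2 * (1 + (n - 1) * ρ1)) / (E * (1 - ρ2))) (g := 1 / (1 - ρ2))
    (by field_simp) (by field_simp) (by field_simp; rw [hE_def]; ring)
    (by field_simp; rw [hE_def]; ring) (by field_simp; rw [hE_def]; ring)
    (by field_simp; rw [hE_def]; ring)
  exact ⟨(isUnit_iff_isUnit_det _).mpr (isUnit_det_of_right_inverse hinv),
    _, _, _, _, _, inv_eq_right_inv hinv⟩

theorem stmt_7 (n m : ℕ) (hn : 1 ≤ n) (hm : 1 ≤ m) (ρ1 ρ2 ρ12 : ℝ)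
    (h1 : ρ1 ≠ 1) (h2 : ρ2 ≠ 1)
    (hD1 : 1 + ((n : ℝ) - 1) * ρ1 ≠ 0)
    (hE : (1 + ((n : ℝ) - 1) * ρ1) * (1 + ((m : ℝ) - 1) * ρ2)
        - (m : ℝ) * (n : ℝ) * ρ12 ^ 2 ≠ 0) :
    IsUnit (Matrix.fromBlocks
        (ρ1 • J n n + (1 - ρ1) • (1 : Matrix (Fin n) (Fin n) ℝ)) (ρ12 • J n m)
        (ρ12 • J m n) (ρ2 • J m m + (1 - ρ2) • (1 : Matrix (Fin m) (Fin m) ℝ))) ∧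
    ∃ a b c d g : ℝ,
      (Matrix.fromBlocks
          (ρ1 • J n n + (1 - ρ1) • (1 : Matrix (Fin n) (Fin n) ℝ)) (ρ12 • J n m)
          (ρ12 • J m n) (ρ2 • J m m + (1 - ρ2) • (1 : Matrix (Fin m) (Fin m) ℝ)))⁻¹
        = Matrix.fromBlocks
            (a • J n n + b • (1 : Matrix (Fin n) (Fin n) ℝ)) (c • J n m)
            (c • J m n) (d • J m m + g • (1 : Matrix (Fin m) (Fin m) ℝ)) :=
  stmt_7_general n m ρ1 ρ2 ρ12 h1 h2 hE
end
end

section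
/- Let N, n, m be integers with 0 ≤ n ≤ N−1 and 1 ≤ m ≤ N, and put p := N−n and q := N−m. Let ρ1, ρ2, ρ12 be real numbers with ρ1 ≠ 1, ρ2 ≠ 1, D1 := 1+(p−1)ρ1 ≠ 0 and D2 := D1·(1+(q−1)ρ2) − p·q·ρ12² ≠ 0. Let R be the (p+q)×(p+q) block matrix [[ρ1·J_p + (1−ρ1)·I_p, ρ12·J_{p,q}], [ρ12·J_{q,p}, ρ2·J_q + (1−ρ2)·I_q]], and let B be the m×(p+q) matrix whose first p columns have all entries equal to ρ12 and whose last q columns have all entries equal to ρ2. Then R is invertible and 𝟙ᵀ · ((ρ2·J_m + (1−ρ2)·I_m) − B·R⁻¹·Bᵀ) · 𝟙 = φ(N,n,m,ρ1,ρ2,ρ12). -/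
open Matrix

noncomputable section

/-- The two-layer Schur-complement quantity φ(N,n,m,ρ1,ρ2,ρ12) of the paper. -/
def phi (N n m : ℕ) (ρ1 ρ2 ρ12 : ℝ) : ℝ :=
  let D1 : ℝ := 1 + ((N : ℝ) - (n : ℝ) - 1) * ρ1
  let D2 : ℝ := D1 * (1 + ((N : ℝ) - (m : ℝ) - 1) * ρ2)
    - ((N : ℝ) - (m : ℝ)) * ((N : ℝ) - (n : ℝ)) * ρ12 ^ 2
  (m : ℝ) * (1 + ((m : ℝ) - 1) * ρ2)
    - (m : ℝ) ^ 2 * ((N : ℝ) - (n : ℝ)) * ρ12 ^ 2 / D1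
    - (m : ℝ) ^ 2 * ((N : ℝ) - (n : ℝ)) ^ 2 * ((N : ℝ) - (m : ℝ)) * ρ12 ^ 4 / (D1 * D2)
    + 2 * (m : ℝ) ^ 2 * ((N : ℝ) - (m : ℝ)) * ((N : ℝ) - (n : ℝ)) * ρ2 * ρ12 ^ 2 / D2
    - (m : ℝ) ^ 2 * ((N : ℝ) - (m : ℝ)) * ρ2 ^ 2 * D1 / D2

/-- The structured block matrix R over `Fin p ⊕ Fin q`. -/
def Rmat (p q : ℕ) (ρ1 ρ2 ρ12 : ℝ) : Matrix (Fin p ⊕ Fin q) (Fin p ⊕ Fin q) ℝ :=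
  Matrix.fromBlocks (ρ1 • J p p + (1 - ρ1) • 1) (ρ12 • J p q)
    (ρ12 • J q p) (ρ2 • J q q + (1 - ρ2) • 1)

/-- The m×(p+q) matrix whose first p columns are all ρ12 and last q columns all ρ2. -/
def Bmat (m p q : ℕ) (ρ12 ρ2 : ℝ) : Matrix (Fin m) (Fin p ⊕ Fin q) ℝ :=
  Matrix.of fun _ j => Sum.elim (fun _ => ρ12) (fun _ => ρ2) j

/-!
On vectors that are constant on each of the two blocks, `R` acts as the `2 × 2` matrix
`[[D1, q ρ12], [p ρ12, 1 + (q - 1) ρ2]]`, whose determinant is `D2`. Since `ρ1, ρ2 ≠ 1`,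
a kernel vector of `R` is block-constant, so its block sums solve this `2 × 2` system and
vanish; hence `R` is invertible. Every row of `B` is the block-constant vector `v = (ρ12, ρ2)`,
so `B R⁻¹ Bᵀ` is the constant matrix with entry `v ⬝ᵥ R⁻¹ v`, and `R⁻¹ v` is given by
Cramer's rule.
-/

lemma J_mulVec (a b : ℕ) (v : Fin b → ℝ) : J a b *ᵥ v = fun _ => ∑ j, v j := by
  ext i
  simp only [mulVec, dotProduct, _root_.J, of_apply, one_mul]

lemma Matrix.replicateRow_mul_mul_transpose {ι n α : Type*} [Fintype n] [CommSemiring α]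
    (v : n → α) (A : Matrix n n α) :
    replicateRow ι v * A * (replicateRow ι v)ᵀ = of fun _ _ => v ⬝ᵥ (A *ᵥ v) := by
  rw [transpose_replicateRow, Matrix.mul_assoc, ← replicateCol_mulVec,
    replicateRow_mul_replicateCol]

lemma sum_sum_smul_J_add_smul_one_sub_const (m : ℕ) (a b c : ℝ) :
    ∑ i : Fin m, ∑ j : Fin m,
      (a • J m m + b • 1 - of fun _ _ => c : Matrix (Fin m) (Fin m) ℝ) i j
      = m ^ 2 * a + m * b - m ^ 2 * c := by
  simp only [_root_.J, Matrix.sub_apply, Matrix.add_apply, Matrix.smul_apply, of_apply, one_apply,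
    smul_eq_mul, mul_ite, mul_one, mul_zero, Finset.sum_sub_distrib, Finset.sum_add_distrib,
    Finset.sum_ite_eq, Finset.mem_univ, if_true, Fin.sum_const, nsmul_eq_mul]
  ring

/-- The paper's `D2`. -/
def blockDet (p q : ℕ) (ρ1 ρ2 ρ12 : ℝ) : ℝ :=
  (1 + (p - 1) * ρ1) * (1 + (q - 1) * ρ2) - p * q * ρ12 ^ 2

section

variable {p q : ℕ}

def blockConst (x y : ℝ) : Fin p ⊕ Fin q → ℝ := Sum.elim (fun _ => x) (fun _ => y)

lemma blockConst_dotProduct (x y u v : ℝ) :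
    blockConst (p := p) (q := q) x y ⬝ᵥ blockConst u v = p * x * u + q * y * v := by
  simp only [dotProduct, blockConst, Fintype.sum_sum_type, Sum.elim_inl, Sum.elim_inr,
    Fin.sum_const, nsmul_eq_mul]
  ring

lemma Rmat_mulVec (ρ1 ρ2 ρ12 : ℝ) (x : Fin p ⊕ Fin q → ℝ) :
    Rmat p q ρ1 ρ2 ρ12 *ᵥ x =
      Sum.elim
        (fun i => ρ1 * ∑ k, x (.inl k) + ρ12 * ∑ k, x (.inr k) + (1 - ρ1) * x (.inl i))
        (fun j => ρ12 * ∑ k, x (.inl k) + ρ2 * ∑ k, x (.inr k) + (1 - ρ2) * x (.inr j)) := by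
  rw [Rmat, fromBlocks_mulVec]
  congr 1 <;> ext <;>
    simp only [add_mulVec, smul_mulVec, one_mulVec, J_mulVec, Function.comp_apply,
      Pi.add_apply, Pi.smul_apply, smul_eq_mul] <;> ring

lemma Rmat_mulVec_blockConst (ρ1 ρ2 ρ12 x y : ℝ) :
    Rmat p q ρ1 ρ2 ρ12 *ᵥ blockConst x y =
      blockConst ((1 + (p - 1) * ρ1) * x + q * ρ12 * y)
        (p * ρ12 * x + (1 + (q - 1) * ρ2) * y) := by
  rw [Rmat_mulVec, blockConst]
  congr 1 <;> ext <;>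
    simp only [Sum.elim_inl, Sum.elim_inr, Fin.sum_const, nsmul_eq_mul] <;> ring

lemma Rmat_det_ne_zero {ρ1 ρ2 ρ12 : ℝ} (h1 : ρ1 ≠ 1) (h2 : ρ2 ≠ 1)
    (hD : blockDet p q ρ1 ρ2 ρ12 ≠ 0) :
    (Rmat p q ρ1 ρ2 ρ12).det ≠ 0 := by
  rw [Ne, ← exists_mulVec_eq_zero_iff]
  unfold blockDet at hD
  rintro ⟨x, hx0, hx⟩
  set S1 := ∑ k, x (.inl k)
  set S2 := ∑ k, x (.inr k)
  have hl (i : Fin p) : ρ1 * S1 + ρ12 * S2 + (1 - ρ1) * x (.inl i) = 0 := by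
    simpa [Rmat_mulVec] using congrFun hx (.inl i)
  have hr (j : Fin q) : ρ12 * S1 + ρ2 * S2 + (1 - ρ2) * x (.inr j) = 0 := by
    simpa [Rmat_mulVec] using congrFun hx (.inr j)
  have hsl : (1 + (p - 1) * ρ1) * S1 + p * ρ12 * S2 = 0 := by
    have : ∑ i, (ρ1 * S1 + ρ12 * S2 + (1 - ρ1) * x (.inl i)) = 0 :=
      Finset.sum_eq_zero fun i _ => hl i
    rw [Finset.sum_add_distrib, ← Finset.mul_sum, Fin.sum_const, nsmul_eq_mul] at this
    linear_combination this
  have hsr : q * ρ12 * S1 + (1 + (q - 1) * ρ2) * S2 = 0 := by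
    have : ∑ j, (ρ12 * S1 + ρ2 * S2 + (1 - ρ2) * x (.inr j)) = 0 :=
      Finset.sum_eq_zero fun j _ => hr j
    rw [Finset.sum_add_distrib, ← Finset.mul_sum, Fin.sum_const, nsmul_eq_mul] at this
    linear_combination this
  have hS1 : S1 = 0 := by
    refine (mul_eq_zero.mp ?_).resolve_left hD
    linear_combination (1 + (q - 1) * ρ2) * hsl - p * ρ12 * hsr
  have hS2 : S2 = 0 := by
    refine (mul_eq_zero.mp ?_).resolve_left hD
    linear_combination (1 + (p - 1) * ρ1) * hsr - q * ρ12 * hsl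
  refine hx0 (funext fun k => ?_)
  rcases k with i | j
  · simpa [hS1, hS2, sub_eq_zero, h1.symm] using hl i
  · simpa [hS1, hS2, sub_eq_zero, h2.symm] using hr j

lemma Rmat_inv_mulVec_blockConst {ρ1 ρ2 ρ12 : ℝ} (h1 : ρ1 ≠ 1) (h2 : ρ2 ≠ 1)
    (hD : blockDet p q ρ1 ρ2 ρ12 ≠ 0) :
    (Rmat p q ρ1 ρ2 ρ12)⁻¹ *ᵥ blockConst ρ12 ρ2 =
      blockConst (ρ12 * (1 - ρ2) / blockDet p q ρ1 ρ2 ρ12)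
        ((ρ2 * (1 + (p - 1) * ρ1) - p * ρ12 ^ 2) / blockDet p q ρ1 ρ2 ρ12) := by
  have hsol : Rmat p q ρ1 ρ2 ρ12 *ᵥ blockConst (ρ12 * (1 - ρ2) / blockDet p q ρ1 ρ2 ρ12)
      ((ρ2 * (1 + (p - 1) * ρ1) - p * ρ12 ^ 2) / blockDet p q ρ1 ρ2 ρ12) =
      blockConst ρ12 ρ2 := by
    rw [Rmat_mulVec_blockConst]
    congr 1 <;> field_simp <;> unfold blockDet <;> ring
  rw [← hsol, mulVec_mulVec, nonsing_inv_mul _ (Rmat_det_ne_zero h1 h2 hD).isUnit,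
    one_mulVec]

lemma Bmat_mul_inv_mul_transpose {m : ℕ} {ρ1 ρ2 ρ12 : ℝ} (h1 : ρ1 ≠ 1) (h2 : ρ2 ≠ 1)
    (hD : blockDet p q ρ1 ρ2 ρ12 ≠ 0) :
    Bmat m p q ρ12 ρ2 * (Rmat p q ρ1 ρ2 ρ12)⁻¹ * (Bmat m p q ρ12 ρ2)ᵀ =
      of fun _ _ => (p * ρ12 ^ 2 * (1 - ρ2) + q * ρ2 * (ρ2 * (1 + (p - 1) * ρ1) - p * ρ12 ^ 2))
        / blockDet p q ρ1 ρ2 ρ12 := by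
  rw [show Bmat m p q ρ12 ρ2 = replicateRow (Fin m) (blockConst ρ12 ρ2) from rfl,
    replicateRow_mul_mul_transpose, Rmat_inv_mulVec_blockConst h1 h2 hD, blockConst_dotProduct]
  ext
  simp only [of_apply]
  ring

lemma phi_eq {N n m : ℕ} {ρ1 ρ2 ρ12 : ℝ} (hp : (p : ℝ) = N - n) (hq : (q : ℝ) = N - m)
    (hD1 : 1 + (p - 1) * ρ1 ≠ 0) (hD : blockDet p q ρ1 ρ2 ρ12 ≠ 0) :
    phi N n m ρ1 ρ2 ρ12 = m ^ 2 * ρ2 + m * (1 - ρ2) - m ^ 2 *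
      ((p * ρ12 ^ 2 * (1 - ρ2) + q * ρ2 * (ρ2 * (1 + (p - 1) * ρ1) - p * ρ12 ^ 2))
        / blockDet p q ρ1 ρ2 ρ12) := by
  have hD' : (1 + (p - 1) * ρ1) * (1 + (q - 1) * ρ2) - q * p * ρ12 ^ 2 =
      blockDet p q ρ1 ρ2 ρ12 := by
    rw [blockDet, mul_comm (q : ℝ)]
  dsimp only [phi]
  rw [← hp, ← hq, hD']
  field_simp
  unfold blockDet
  ring

end

theorem stmt_9_general (N n m : ℕ) (hn : n ≤ N - 1) (hm2 : m ≤ N)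
    (ρ1 ρ2 ρ12 : ℝ) (h1 : ρ1 ≠ 1) (h2 : ρ2 ≠ 1)
    (hD1 : 1 + (((N - n : ℕ) : ℝ) - 1) * ρ1 ≠ 0)
    (hD2 : (1 + (((N - n : ℕ) : ℝ) - 1) * ρ1) * (1 + (((N - m : ℕ) : ℝ) - 1) * ρ2)
        - ((N - n : ℕ) : ℝ) * ((N - m : ℕ) : ℝ) * ρ12 ^ 2 ≠ 0) :
    IsUnit (Rmat (N - n) (N - m) ρ1 ρ2 ρ12) ∧
    ∑ i : Fin m, ∑ j : Fin m,
        ((ρ2 • J m m + (1 - ρ2) • (1 : Matrix (Fin m) (Fin m) ℝ))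
          - Bmat m (N - n) (N - m) ρ12 ρ2 * (Rmat (N - n) (N - m) ρ1 ρ2 ρ12)⁻¹ *
            (Bmat m (N - n) (N - m) ρ12 ρ2)ᵀ) i j
      = phi N n m ρ1 ρ2 ρ12 := by
  have hnN : n ≤ N := hn.trans (Nat.sub_le N 1)
  refine ⟨(isUnit_iff_isUnit_det _).mpr (Rmat_det_ne_zero h1 h2 hD2).isUnit, ?_⟩
  rw [Bmat_mul_inv_mul_transpose h1 h2 hD2, sum_sum_smul_J_add_smul_one_sub_const,
    phi_eq (Nat.cast_sub hnN) (Nat.cast_sub hm2) hD1 hD2]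

theorem stmt_9 (N n m : ℕ) (hn : n ≤ N - 1) (hm1 : 1 ≤ m) (hm2 : m ≤ N)
    (ρ1 ρ2 ρ12 : ℝ) (h1 : ρ1 ≠ 1) (h2 : ρ2 ≠ 1)
    (hD1 : 1 + (((N - n : ℕ) : ℝ) - 1) * ρ1 ≠ 0)
    (hD2 : (1 + (((N - n : ℕ) : ℝ) - 1) * ρ1) * (1 + (((N - m : ℕ) : ℝ) - 1) * ρ2)
        - ((N - n : ℕ) : ℝ) * ((N - m : ℕ) : ℝ) * ρ12 ^ 2 ≠ 0) :
    IsUnit (Rmat (N - n) (N - m) ρ1 ρ2 ρ12) ∧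
    ∑ i : Fin m, ∑ j : Fin m,
        ((ρ2 • J m m + (1 - ρ2) • (1 : Matrix (Fin m) (Fin m) ℝ))
          - Bmat m (N - n) (N - m) ρ12 ρ2 * (Rmat (N - n) (N - m) ρ1 ρ2 ρ12)⁻¹ *
            (Bmat m (N - n) (N - m) ρ12 ρ2)ᵀ) i j
      = phi N n m ρ1 ρ2 ρ12 :=
  stmt_9_general N n m hn hm2 ρ1 ρ2 ρ12 h1 h2 hD1 hD2
end
end

section
/- Let N ≥ 2 and 1 ≤ m ≤ N be integers. Then (a) for every real ρ with −1/(N−1) ≤ ρ ≤ 0 one has ψ(N,m,ρ) ≤ m = ψ(N,m,0); and consequently (b) the supremum of ψ(N,m,ρ) over ρ ∈ [−1/(N−1), 1) equals the supremum of ψ(N,m,ρ) over ρ ∈ [0, 1). -/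
/-! On the admissible range of `ρ` the denominator `1 + (N - n - 1) ρ` is nonnegative, so the
subtracted term of `ψ` is nonnegative and `ψ(N, n, ρ) ≤ n (1 + (n - 1) ρ)`. For `ρ ≤ 0` this is at
most `n = ψ(N, n, 0)`, so negative correlations never beat `ρ = 0`; for `ρ ∈ [0, 1]` it is at most
`n²`, which makes the suprema finite. -/

noncomputable section

/-- The cut-set quantity ψ(N,n,ρ) of Niesen–Diggavi. -/
def psi (N n : ℕ) (ρ : ℝ) : ℝ :=
  (n : ℝ) * (1 + ((n : ℝ) - 1) * ρ
    - (n : ℝ) * ((N : ℝ) - (n : ℝ)) * ρ ^ 2 / (1 + ((N : ℝ) - (n : ℝ) - 1) * ρ))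

open Set

theorem csSup_image_Ico_eq_of_le_apply {α β : Type*} [LinearOrder α]
    [ConditionallyCompleteLattice β] {f : α → β} {a b c : α} (hac : a ≤ c) (hcb : c < b)
    (hbdd : BddAbove (f '' Ico c b)) (hf : ∀ x ∈ Ico a c, f x ≤ f c) :
    sSup (f '' Ico a b) = sSup (f '' Ico c b) := by
  have hc : c ∈ Ico c b := ⟨le_rfl, hcb⟩
  have hsub : f '' Ico c b ⊆ f '' Ico a b := image_mono (Ico_subset_Ico_left hac)
  have hle : ∀ x ∈ Ico a b, f x ≤ sSup (f '' Ico c b) := by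
    intro x hx
    rcases lt_or_ge x c with hxc | hcx
    · exact (hf x ⟨hx.1, hxc⟩).trans (le_csSup hbdd (mem_image_of_mem f hc))
    · exact le_csSup hbdd (mem_image_of_mem f ⟨hcx, hx.2⟩)
  refine le_antisymm ?_ ?_
  · exact csSup_le ((nonempty_of_mem hc).image f |>.mono hsub) (forall_mem_image.2 hle)
  · exact csSup_le_csSup ⟨_, forall_mem_image.2 hle⟩ ((nonempty_of_mem hc).image f) hsub

theorem natCast_mul_sub_one_nonneg (n : ℕ) : (0 : ℝ) ≤ n * ((n : ℝ) - 1) := by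
  rcases Nat.eq_zero_or_pos n with rfl | hpos
  · simp
  · have : (1 : ℝ) ≤ n := by exact_mod_cast hpos
    nlinarith

theorem psi_zero (N n : ℕ) : psi N n 0 = n := by
  simp [psi]

theorem psi_le_of_denom_nonneg {N n : ℕ} {ρ : ℝ} (hn : n ≤ N)
    (hD : 0 ≤ 1 + ((N : ℝ) - n - 1) * ρ) : psi N n ρ ≤ n * (1 + ((n : ℝ) - 1) * ρ) := by
  have hNn : (0 : ℝ) ≤ (N : ℝ) - n := sub_nonneg.2 (by exact_mod_cast hn)
  have hcorr : 0 ≤ (n : ℝ) * ((N : ℝ) - n) * ρ ^ 2 / (1 + ((N : ℝ) - n - 1) * ρ) := by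
    positivity
  unfold psi
  nlinarith [(Nat.cast_nonneg n : (0 : ℝ) ≤ n)]

theorem psi_denom_nonneg_of_nonpos {N n : ℕ} {ρ : ℝ} (hN : 2 ≤ N)
    (hρ₁ : -1 / ((N : ℝ) - 1) ≤ ρ) (hρ₂ : ρ ≤ 0) : 0 ≤ 1 + ((N : ℝ) - n - 1) * ρ := by
  have hN1 : (0 : ℝ) < (N : ℝ) - 1 := by
    have : (2 : ℝ) ≤ N := by exact_mod_cast hN
    linarith
  have hρN : -1 ≤ ((N : ℝ) - 1) * ρ := by
    rw [div_le_iff₀ hN1] at hρ₁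
    linarith
  -- `(N - n - 1) ρ ≥ (N - 1) ρ` because `ρ ≤ 0`
  nlinarith [(Nat.cast_nonneg n : (0 : ℝ) ≤ n)]

theorem psi_denom_nonneg_of_nonneg {N n : ℕ} {ρ : ℝ} (hn : n ≤ N) (hρ₀ : 0 ≤ ρ) (hρ₁ : ρ ≤ 1) :
    0 ≤ 1 + ((N : ℝ) - n - 1) * ρ := by
  have hNn : (0 : ℝ) ≤ (N : ℝ) - n := sub_nonneg.2 (by exact_mod_cast hn)
  nlinarith

theorem psi_le_of_nonpos {N n : ℕ} {ρ : ℝ} (hN : 2 ≤ N) (hn : n ≤ N)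
    (hρ₁ : -1 / ((N : ℝ) - 1) ≤ ρ) (hρ₂ : ρ ≤ 0) : psi N n ρ ≤ n := by
  have := psi_le_of_denom_nonneg hn (psi_denom_nonneg_of_nonpos (n := n) hN hρ₁ hρ₂)
  nlinarith [mul_nonpos_of_nonneg_of_nonpos (natCast_mul_sub_one_nonneg n) hρ₂]

theorem psi_le_sq {N n : ℕ} {ρ : ℝ} (hn : n ≤ N) (hρ₀ : 0 ≤ ρ) (hρ₁ : ρ ≤ 1) :
    psi N n ρ ≤ (n : ℝ) ^ 2 := by
  have := psi_le_of_denom_nonneg hn (psi_denom_nonneg_of_nonneg hn hρ₀ hρ₁)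
  nlinarith [mul_le_mul_of_nonneg_left hρ₁ (natCast_mul_sub_one_nonneg n)]

theorem bddAbove_psi_image_Ico (N n : ℕ) (hn : n ≤ N) : BddAbove (psi N n '' Ico 0 1) :=
  ⟨(n : ℝ) ^ 2, forall_mem_image.2 fun _ hρ => psi_le_sq hn hρ.1 hρ.2.le⟩

theorem stmt_11_general (N m : ℕ) (hN : 2 ≤ N) (hm2 : m ≤ N) :
    (∀ ρ : ℝ, -1 / ((N : ℝ) - 1) ≤ ρ → ρ ≤ 0 → psi N m ρ ≤ (m : ℝ)) ∧
    psi N m 0 = (m : ℝ) ∧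
    sSup (psi N m '' Set.Ico (-1 / ((N : ℝ) - 1)) 1)
      = sSup (psi N m '' Set.Ico (0 : ℝ) 1) := by
  have hle : ∀ ρ : ℝ, -1 / ((N : ℝ) - 1) ≤ ρ → ρ ≤ 0 → psi N m ρ ≤ m :=
    fun ρ hρ₁ hρ₂ => psi_le_of_nonpos hN hm2 hρ₁ hρ₂
  have hneg : -1 / ((N : ℝ) - 1) ≤ 0 := by
    have : (2 : ℝ) ≤ N := by exact_mod_cast hN
    exact div_nonpos_of_nonpos_of_nonneg (by norm_num) (by linarith)
  refine ⟨hle, psi_zero N m, ?_⟩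
  refine csSup_image_Ico_eq_of_le_apply hneg one_pos (bddAbove_psi_image_Ico N m hm2) ?_
  intro ρ hρ
  rw [psi_zero]
  exact hle ρ hρ.1 hρ.2.le

theorem stmt_11 (N m : ℕ) (hN : 2 ≤ N) (hm1 : 1 ≤ m) (hm2 : m ≤ N) :
    (∀ ρ : ℝ, -1 / ((N : ℝ) - 1) ≤ ρ → ρ ≤ 0 → psi N m ρ ≤ (m : ℝ)) ∧
    psi N m 0 = (m : ℝ) ∧
    sSup (psi N m '' Set.Ico (-1 / ((N : ℝ) - 1)) 1)
      = sSup (psi N m '' Set.Ico (0 : ℝ) 1) :=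
  stmt_11_general N m hN hm2
end
end

section
/- Let N, n, m be integers with 1 ≤ m ≤ N and 0 ≤ n ≤ N−1, and let ρ1, ρ2 be real numbers with 1+(N−n−1)ρ1 > 0, 1+(N−m−1)ρ2 ≠ 0 and ρ2 ≠ 1. Then the second derivative at t = 0 of the function t ↦ φ(N,n,m,ρ1,ρ2,t) is strictly negative, and this function has a strict local maximum at t = 0. -/
open Filter

noncomputable section

open Topology

/-!
Write `B = 1 + (N - m - 1) ρ2`, so that `D2(t) = D1 B - (N - m)(N - n) t²`. Clearing the
denominators `D1` and `D2(t)` collapses `φ` to `φ(0) - m² (N - n) (1 - ρ2)² t² / (B D2(t))`.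
As `t → 0` the denominator tends to `B² D1 > 0`, so near `0` the function `φ` is `φ(0)` minus
a positive multiple of `t²`, and its second derivative at `0` is
`-2 m² (N - n) (1 - ρ2)² / (B² D1)`.
-/

theorem hasDerivAt_sq_div_sub_sq (c p q t : ℝ) (h : p - q * t ^ 2 ≠ 0) :
    HasDerivAt (fun s => c * s ^ 2 / (p - q * s ^ 2)) (2 * c * p * t / (p - q * t ^ 2) ^ 2) t := by
  have hnum : HasDerivAt (fun s => c * s ^ 2) (c * (2 * t)) t := by
    simpa using (hasDerivAt_pow 2 t).const_mul c
  have hden : HasDerivAt (fun s => p - q * s ^ 2) (-(q * (2 * t))) t := by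
    simpa using ((hasDerivAt_pow 2 t).const_mul q).const_sub p
  refine (hnum.fun_div hden h).congr_deriv ?_
  ring

theorem deriv_deriv_sq_div_sub_sq_zero (c p q : ℝ) (hp : p ≠ 0) :
    deriv (deriv fun s => c * s ^ 2 / (p - q * s ^ 2)) 0 = 2 * c / p := by
  have hne : ∀ᶠ t in 𝓝 (0 : ℝ), p - q * t ^ 2 ≠ 0 :=
    (by fun_prop : Continuous fun t : ℝ => p - q * t ^ 2).continuousAt.eventually_ne
      (by simpa using hp)
  have hderiv : deriv (fun s => c * s ^ 2 / (p - q * s ^ 2)) =ᶠ[𝓝 0]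
      fun t => 2 * c * p * t / (p - q * t ^ 2) ^ 2 :=
    hne.mono fun t ht => (hasDerivAt_sq_div_sub_sq c p q t ht).deriv
  have hnum : HasDerivAt (fun t : ℝ => 2 * c * p * t) (2 * c * p) 0 := by
    simpa using (hasDerivAt_id (0 : ℝ)).const_mul (2 * c * p)
  have hden : HasDerivAt (fun t : ℝ => (p - q * t ^ 2) ^ 2) 0 0 := by
    simpa using (((hasDerivAt_pow 2 (0:ℝ)).const_mul q).const_sub p).fun_pow 2
  rw [hderiv.deriv_eq, (hnum.fun_div hden (by simpa using hp)).deriv]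
  simp only [ne_eq, OfNat.ofNat_ne_zero, not_false_eq_true, zero_pow, mul_zero, sub_zero]
  field_simp

theorem phi_eq_phi_zero_sub (N n m : ℕ) (ρ1 ρ2 t : ℝ)
    (hD1 : 1 + ((N : ℝ) - n - 1) * ρ1 ≠ 0)
    (h : (1 + ((N : ℝ) - m - 1) * ρ2) ^ 2 * (1 + ((N : ℝ) - n - 1) * ρ1)
      - (1 + ((N : ℝ) - m - 1) * ρ2) * ((N : ℝ) - m) * ((N : ℝ) - n) * t ^ 2 ≠ 0) :
    phi N n m ρ1 ρ2 t = phi N n m ρ1 ρ2 0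
      - (m : ℝ) ^ 2 * ((N : ℝ) - n) * (1 - ρ2) ^ 2 * t ^ 2 /
      ((1 + ((N : ℝ) - m - 1) * ρ2) ^ 2 * (1 + ((N : ℝ) - n - 1) * ρ1)
        - (1 + ((N : ℝ) - m - 1) * ρ2) * ((N : ℝ) - m) * ((N : ℝ) - n) * t ^ 2) := by
  simp only [phi]
  set x := 1 + ((N : ℝ) - n - 1) * ρ1
  set b := (N : ℝ) - m
  set B := 1 + (b - 1) * ρ2 with hB_def
  set D := x * B - b * ((N : ℝ) - n) * t ^ 2 with hD_def
  rw [show B ^ 2 * x - B * b * ((N : ℝ) - n) * t ^ 2 = B * D by ring] at h ⊢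
  obtain ⟨hB, hD⟩ := mul_ne_zero_iff.mp h
  rw [show x * B - b * ((N : ℝ) - n) * 0 ^ 2 = x * B by ring]
  field_simp
  rw [hD_def, hB_def]
  ring

theorem stmt_14 (N n m : ℕ) (hm1 : 1 ≤ m) (hm2 : m ≤ N) (hn : n ≤ N - 1)
    (ρ1 ρ2 : ℝ)
    (hD1 : 0 < 1 + ((N : ℝ) - (n : ℝ) - 1) * ρ1)
    (hD2 : 1 + ((N : ℝ) - (m : ℝ) - 1) * ρ2 ≠ 0)
    (h2 : ρ2 ≠ 1) :
    deriv (deriv (fun t : ℝ => phi N n m ρ1 ρ2 t)) 0 < 0 ∧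
    ∀ᶠ t in nhdsWithin (0 : ℝ) {(0 : ℝ)}ᶜ,
      phi N n m ρ1 ρ2 t < phi N n m ρ1 ρ2 0 := by
  set B := 1 + ((N : ℝ) - m - 1) * ρ2
  set p := B ^ 2 * (1 + ((N : ℝ) - n - 1) * ρ1)
  set q := B * ((N : ℝ) - m) * ((N : ℝ) - n)
  set c := (m : ℝ) ^ 2 * ((N : ℝ) - n) * (1 - ρ2) ^ 2
  have hp : 0 < p := by positivity
  have hc : 0 < c := by
    have hnN : (n : ℝ) < N := by exact_mod_cast (by omega : n < N)
    have hm : (0 : ℝ) < m := by exact_mod_cast hm1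
    have hρ2 : 1 - ρ2 ≠ 0 := sub_ne_zero.mpr h2.symm
    positivity
  have hden : ∀ᶠ t in 𝓝 (0 : ℝ), 0 < p - q * t ^ 2 :=
    (by fun_prop : Continuous fun t : ℝ => p - q * t ^ 2).continuousAt.eventually
      (eventually_gt_nhds (by simpa using hp))
  have hphi : (fun t => phi N n m ρ1 ρ2 t) =ᶠ[𝓝 0]
      fun t => phi N n m ρ1 ρ2 0 - c * t ^ 2 / (p - q * t ^ 2) :=
    hden.mono fun t ht => phi_eq_phi_zero_sub N n m ρ1 ρ2 t hD1.ne' ht.ne'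
  constructor
  · rw [hphi.deriv.deriv_eq, deriv_const_sub', deriv.fun_neg,
      deriv_deriv_sq_div_sub_sq_zero c p q hp.ne', neg_neg_iff_pos]
    positivity
  · filter_upwards [nhdsWithin_le_nhds (hphi.and hden), self_mem_nhdsWithin]
      with t ⟨heq, ht⟩ ht0
    rw [heq, sub_lt_self_iff]
    exact div_pos (mul_pos hc (sq_pos_of_ne_zero ht0)) ht
end
end

section
/- Let N, n, m be integers with 1 ≤ m ≤ N−1 and 0 ≤ n ≤ N−1. Then for every real number t with −1 < t < 1, φ(N,n,m,1,1,t) = 0. In particular, the limit of φ(N,n,m,1,1,t) as t → 1 from below, and as t → −1 from above, equals 0. -/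
open Filter

noncomputable section

lemma aux_phi (c A B t : ℝ) (hA : A ≠ 0) (hB : B ≠ 0) (ht : (1:ℝ) - t ^ 2 ≠ 0) :
    c * (1 + (c - 1)) - c ^ 2 * A * t ^ 2 / A
      - c ^ 2 * A ^ 2 * B * t ^ 4 / (A * (A * B - B * A * t ^ 2))
      + 2 * c ^ 2 * B * A * t ^ 2 / (A * B - B * A * t ^ 2)
      - c ^ 2 * B * A / (A * B - B * A * t ^ 2) = 0 := by
  have hD : A * B - B * A * t ^ 2 ≠ 0 := by
    have h : A * B - B * A * t ^ 2 = A * B * (1 - t ^ 2) := by ring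
    rw [h]; exact mul_ne_zero (mul_ne_zero hA hB) ht
  field_simp
  ring

theorem stmt_15 (N n m : ℕ) (hm1 : 1 ≤ m) (hm2 : m ≤ N - 1) (hn : n ≤ N - 1) :
    (∀ t : ℝ, -1 < t → t < 1 → phi N n m 1 1 t = 0) ∧
    Tendsto (fun t : ℝ => phi N n m 1 1 t) (nhdsWithin 1 (Set.Iio (1 : ℝ)))
      (nhds 0) ∧
    Tendsto (fun t : ℝ => phi N n m 1 1 t) (nhdsWithin (-1) (Set.Ioi (-1 : ℝ)))
      (nhds 0) := by
  have hmN : m + 1 ≤ N := by omega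
  have hnN : n + 1 ≤ N := by omega
  have hB : (1:ℝ) ≤ (N:ℝ) - m := by
    have := Nat.cast_le (α := ℝ).2 hmN; push_cast at this; linarith
  have hA : (1:ℝ) ≤ (N:ℝ) - n := by
    have := Nat.cast_le (α := ℝ).2 hnN; push_cast at this; linarith
  have key : ∀ t : ℝ, -1 < t → t < 1 → phi N n m 1 1 t = 0 := by
    intro t h1 h2
    have ht : (1:ℝ) - t ^ 2 ≠ 0 := by nlinarith
    have h := aux_phi (m:ℝ) ((N:ℝ) - n) ((N:ℝ) - m) t (by linarith) (by linarith) ht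
    unfold phi
    linear_combination h
  refine ⟨key, ?_, ?_⟩
  · have hev : (fun t : ℝ => phi N n m 1 1 t) =ᶠ[nhdsWithin 1 (Set.Iio (1:ℝ))]
        (fun _ => (0:ℝ)) := by
      filter_upwards [Ioo_mem_nhdsLT_of_mem (by norm_num : (1:ℝ) ∈ Set.Ioc (-1) 1)]
        with t ht
      exact key t ht.1 ht.2
    rw [tendsto_congr' hev]; exact tendsto_const_nhds
  · have hev : (fun t : ℝ => phi N n m 1 1 t) =ᶠ[nhdsWithin (-1) (Set.Ioi (-1:ℝ))]
        (fun _ => (0:ℝ)) := by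
      filter_upwards [Ioo_mem_nhdsGT_of_mem (by norm_num : (-1:ℝ) ∈ Set.Ico (-1) 1)]
        with t ht
      exact key t ht.1 ht.2
    rw [tendsto_congr' hev]; exact tendsto_const_nhds
end
end

section
/- Let N ≥ 2 be an integer, ρ1 a real number, and ρ2 a real number with −1 ≤ ρ2 < 1. Then the function t ↦ φ(N,N−1,N−1,ρ1,ρ2,t) tends to −∞ as t → −1 from the right (i.e., along t ∈ (−1,1)). -/
open Filter

noncomputable section

open Topology

/- With `n = m = N - 1` one has `D1 = 1` and `D2 = 1 - ρ12²`, and the three terms over `D2`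
combine into `-m²(ρ12² - ρ2)²/(1 - ρ12²)`. As `ρ12 → -1` the numerator tends to
`-m²(1 - ρ2)² < 0` while `1/(1 - ρ12²) → +∞`. -/

/-- Holds for every `t`, also where `1 - t² = 0`, since both sides then divide by zero. -/
lemma phi_succ_self_self (m : ℕ) (ρ1 ρ2 t : ℝ) :
    phi (m + 1) m m ρ1 ρ2 t
      = m * (1 + (m - 1) * ρ2) - m ^ 2 * t ^ 2 + -(m ^ 2 * (t ^ 2 - ρ2) ^ 2) * (1 - t ^ 2)⁻¹ := by
  simp only [phi, Nat.cast_add, Nat.cast_one, add_sub_cancel_left, sub_self, zero_mul,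
    add_zero, mul_one, one_mul, one_pow, div_eq_mul_inv]
  ring

lemma tendsto_inv_one_sub_sq_nhdsGT_neg_one :
    Tendsto (fun t : ℝ => (1 - t ^ 2)⁻¹) (𝓝[>] (-1)) atTop := by
  refine tendsto_inv_nhdsGT_zero.comp (tendsto_nhdsWithin_iff.mpr ⟨?_, ?_⟩)
  · exact ((by fun_prop : Continuous fun t : ℝ => 1 - t ^ 2).tendsto' (-1) 0
      (by norm_num)).mono_left nhdsWithin_le_nhds
  · filter_upwards [Ioo_mem_nhdsGT (show (-1 : ℝ) < 1 by norm_num)] with t ht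
    have : 0 < (1 - t) * (1 + t) := mul_pos (by linarith [ht.2]) (by linarith [ht.1])
    simp only [Set.mem_Ioi]
    linarith

theorem stmt_19_general (N : ℕ) (hN : 2 ≤ N) (ρ1 ρ2 : ℝ) (h2 : ρ2 < 1) :
    Tendsto (fun t : ℝ => phi N (N - 1) (N - 1) ρ1 ρ2 t)
      (nhdsWithin (-1 : ℝ) (Set.Ioo (-1 : ℝ) 1)) atBot := by
  obtain ⟨m, rfl⟩ : ∃ m, N = m + 1 := ⟨N - 1, by omega⟩
  have hm : (0 : ℝ) < m := by exact_mod_cast (show 0 < m by omega)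
  simp only [Nat.add_sub_cancel, phi_succ_self_self]
  refine Tendsto.mono_left ?_ (nhdsWithin_mono _ Set.Ioo_subset_Ioi_self)
  have hconst : Tendsto (fun t : ℝ => m * (1 + (m - 1) * ρ2) - m ^ 2 * t ^ 2) (𝓝[>] (-1))
      (𝓝 (m * (1 + (m - 1) * ρ2) - m ^ 2 * (-1) ^ 2)) :=
    ((by fun_prop : Continuous _).tendsto _).mono_left nhdsWithin_le_nhds
  have hnum : Tendsto (fun t : ℝ => -(m ^ 2 * (t ^ 2 - ρ2) ^ 2)) (𝓝[>] (-1))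
      (𝓝 (-(m ^ 2 * ((-1) ^ 2 - ρ2) ^ 2))) :=
    ((by fun_prop : Continuous _).tendsto _).mono_left nhdsWithin_le_nhds
  have hnum_neg : -((m : ℝ) ^ 2 * ((-1) ^ 2 - ρ2) ^ 2) < 0 := by
    have : 0 < (1 : ℝ) - ρ2 := by linarith
    simp only [neg_one_sq, neg_lt_zero]
    positivity
  exact hconst.add_atBot (hnum.neg_mul_atTop hnum_neg tendsto_inv_one_sub_sq_nhdsGT_neg_one)

theorem stmt_19 (N : ℕ) (hN : 2 ≤ N) (ρ1 ρ2 : ℝ) (h1 : -1 ≤ ρ2) (h2 : ρ2 < 1) :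
    Tendsto (fun t : ℝ => phi N (N - 1) (N - 1) ρ1 ρ2 t)
      (nhdsWithin (-1 : ℝ) (Set.Ioo (-1 : ℝ) 1)) atBot :=
  stmt_19_general N hN ρ1 ρ2 h2
end
end
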